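/- Let a, b, c, d ∈ ℂ and define H_V(x,u,v) = (1/x)·[u(u−1)²v² − (a(u−1)² + bu(u−1) − cxu)v + (1/4)((a+b)² − d²)(u−1)]. Then there exist complex numbers α, β, γ, δ (depending only on a, b, c, d) such that for every open set Ω ⊆ ℂ and all differentiable functions u, v : Ω → ℂ with x ≠ 0, u(x) ≠ 0 and u(x) ≠ 1 for all x ∈ Ω, if u'(x) = (∂H_V/∂v)(x,u(x),v(x)) and v'(x) = −(∂H_V/∂u)(x,u(x),v(x)) for all x ∈ Ω, then u''(x) = (1/(2u(x)) + 1/(u(x)−1))·u'(x)² − u'(x)/x + ((u(x)−1)²/x²)·(α·u(x) + β/u(x)) + γ·u(x)/x + δ·u(x)(u(x)+1)/(u(x)−1) for all x ∈ Ω. -/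

import Mathlib

/-!
Along a solution, `u' = ∂H_V/∂v` is affine in `v`. Differentiating it once more and substituting
`v' = -∂H_V/∂u` writes `u''` as a rational function of `x, u, v`; so does the `P_V` right-hand
side once `u'` is replaced by `∂H_V/∂v`, and the two agree identically in `x, u, v` for
`α = d²/2`, `β = -a²/2`, `γ = c(b+1)`, `δ = -c²/2`.
-/

/-- The Okamoto Hamiltonian of the fifth Painlevé equation:
`H_V(x,u,v) = (1/x)·[u(u−1)²v² − (a(u−1)² + bu(u−1) − cxu)v + (1/4)((a+b)² − d²)(u−1)]`. -/
noncomputable def HV (a b c d x u v : ℂ) : ℂ :=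
  (1 / x) * (u * (u - 1) ^ 2 * v ^ 2
    - (a * (u - 1) ^ 2 + b * u * (u - 1) - c * x * u) * v
    + (1 / 4) * ((a + b) ^ 2 - d ^ 2) * (u - 1))

noncomputable def painleveVRhs (α β γ δ x u u' : ℂ) : ℂ :=
  (1 / (2 * u) + 1 / (u - 1)) * u' ^ 2 - u' / x + ((u - 1) ^ 2 / x ^ 2) * (α * u + β / u)
    + γ * u / x + δ * u * (u + 1) / (u - 1)

namespace HV

noncomputable def dv (a b c x u v : ℂ) : ℂ :=
  (1 / x) * (2 * u * (u - 1) ^ 2 * v - (a * (u - 1) ^ 2 + b * u * (u - 1) - c * x * u))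

noncomputable def du (a b c d x u v : ℂ) : ℂ :=
  (1 / x) * ((3 * u ^ 2 - 4 * u + 1) * v ^ 2 - (2 * a * (u - 1) + b * (2 * u - 1) - c * x) * v
    + (1 / 4) * ((a + b) ^ 2 - d ^ 2))

noncomputable def dvAlong (a b c x u v u' v' : ℂ) : ℂ :=
  (1 / x) * (2 * u' * (u - 1) ^ 2 * v + 4 * u * (u - 1) * u' * v + 2 * u * (u - 1) ^ 2 * v'
      - (2 * a * (u - 1) * u' + b * (2 * u - 1) * u' - c * u - c * x * u'))
    - (1 / x ^ 2) * (2 * u * (u - 1) ^ 2 * v - (a * (u - 1) ^ 2 + b * u * (u - 1) - c * x * u))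

theorem hasDerivAt_v (a b c d x u v : ℂ) :
    HasDerivAt (fun w => HV a b c d x u w) (dv a b c x u v) v := by
  refine ((((hasDerivAt_pow 2 v).const_mul (u * (u - 1) ^ 2)).sub
    ((hasDerivAt_id' v).const_mul (a * (u - 1) ^ 2 + b * u * (u - 1) - c * x * u))).add_const
    ((1 / 4) * ((a + b) ^ 2 - d ^ 2) * (u - 1)) |>.const_mul (1 / x)).congr_deriv ?_
  simp only [dv, Nat.cast_ofNat]
  ring

theorem hasDerivAt_u (a b c d x u v : ℂ) :
    HasDerivAt (fun w => HV a b c d x w v) (du a b c d x u v) u := by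
  have h_cubic : (fun w => HV a b c d x w v) = fun w => (1 / x) * (v ^ 2 * w ^ 3
      + (-2 * v ^ 2 - (a + b) * v) * w ^ 2
      + (v ^ 2 + (2 * a + b + c * x) * v + (1 / 4) * ((a + b) ^ 2 - d ^ 2)) * w
      + (-a * v - (1 / 4) * ((a + b) ^ 2 - d ^ 2))) := by
    ext w
    simp only [HV]
    ring
  rw [h_cubic]
  refine (((((hasDerivAt_pow 3 u).const_mul _).add ((hasDerivAt_pow 2 u).const_mul _)).add
    ((hasDerivAt_id' u).const_mul _)).add_const _ |>.const_mul (1 / x)).congr_deriv ?_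
  simp only [du, Nat.cast_ofNat]
  ring

theorem hasDerivAt_dv_comp {a b c x u' v' : ℂ} {u v : ℂ → ℂ} (hx : x ≠ 0)
    (hu : HasDerivAt u u' x) (hv : HasDerivAt v v' x) :
    HasDerivAt (fun y => dv a b c y (u y) (v y)) (dvAlong a b c x (u x) (v x) u' v') x := by
  have h_num := (((hu.const_mul (2 : ℂ)).mul ((hu.sub_const 1).pow 2)).mul hv).sub
    (((((hu.sub_const 1).pow 2).const_mul a).add ((hu.const_mul b).mul (hu.sub_const 1))).sub
      (((hasDerivAt_id' x).const_mul c).mul hu))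
  simp only [dv, one_div]
  refine ((hasDerivAt_inv hx).mul h_num).congr_deriv ?_
  simp only [dvAlong, Nat.cast_ofNat, Pi.mul_apply, Pi.pow_apply, Pi.sub_apply, Pi.add_apply]
  field_simp
  ring

theorem dvAlong_eq_painleveVRhs (a b c d x u v : ℂ) (hx : x ≠ 0) (hu : u ≠ 0) (hu₁ : u - 1 ≠ 0) :
    dvAlong a b c x u v (dv a b c x u v) (-du a b c d x u v)
      = painleveVRhs (d ^ 2 / 2) (-a ^ 2 / 2) (c * (b + 1)) (-c ^ 2 / 2) x u (dv a b c x u v) := by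
  simp only [dvAlong, dv, du, painleveVRhs]
  field_simp
  ring

end HV

/-- Painlevé V admits a rational Hamiltonian form: there exist parameters `α β γ δ`
(depending only on `a b c d`) such that any solution `(u,v)` of the Hamiltonian system
`u' = ∂H_V/∂v`, `v' = −∂H_V/∂u` on an open set `Ω ⊆ ℂ` (with `x ≠ 0`, `u ≠ 0`, `u ≠ 1`
on `Ω`) has `u` a solution of the fifth Painlevé equation `P_V(α,β,γ,δ)`. -/
theorem stmt_9 (a b c d : ℂ) :
    ∃ α β γ δ : ℂ, ∀ (Ω : Set ℂ), IsOpen Ω → ∀ u v : ℂ → ℂ,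
      (∀ x ∈ Ω, x ≠ 0) → (∀ x ∈ Ω, u x ≠ 0) → (∀ x ∈ Ω, u x ≠ 1) →
      (∀ x ∈ Ω, HasDerivAt u (deriv (fun w => HV a b c d x (u x) w) (v x)) x) →
      (∀ x ∈ Ω, HasDerivAt v (-(deriv (fun w => HV a b c d x w (v x)) (u x))) x) →
      ∀ x ∈ Ω, deriv (deriv u) x =
        (1 / (2 * u x) + 1 / (u x - 1)) * (deriv u x) ^ 2 - deriv u x / x
          + ((u x - 1) ^ 2 / x ^ 2) * (α * u x + β / u x)
          + γ * u x / x + δ * u x * (u x + 1) / (u x - 1) := by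
  refine ⟨d ^ 2 / 2, -a ^ 2 / 2, c * (b + 1), -c ^ 2 / 2, ?_⟩
  intro Ω hΩ u v hx₀ hu₀ hu₁ hu_ham hv_ham x hx
  have hu' : ∀ y ∈ Ω, HasDerivAt u (HV.dv a b c y (u y) (v y)) y := fun y hy =>
    (HV.hasDerivAt_v a b c d y (u y) (v y)).deriv ▸ hu_ham y hy
  have hv' : HasDerivAt v (-HV.du a b c d x (u x) (v x)) x :=
    (HV.hasDerivAt_u a b c d x (u x) (v x)).deriv ▸ hv_ham x hx
  have hu'' : HasDerivAt (deriv u)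
      (HV.dvAlong a b c x (u x) (v x) (HV.dv a b c x (u x) (v x)) (-HV.du a b c d x (u x) (v x)))
      x := by
    refine (HV.hasDerivAt_dv_comp (hx₀ x hx) (hu' x hx) hv').congr_of_eventuallyEq ?_
    filter_upwards [hΩ.mem_nhds hx] with y hy using (hu' y hy).deriv
  rw [hu''.deriv, (hu' x hx).deriv]
  exact HV.dvAlong_eq_painleveVRhs a b c d x (u x) (v x) (hx₀ x hx) (hu₀ x hx)
    (sub_ne_zero.mpr (hu₁ x hx))
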